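/- Fix n and A, and consider the graph whose vertices are the building sequences in S(n,A), with an edge between a and a' whenever a' is obtained from a by applying one of the four local operations PF(i,j), FV(i,j), FF(i,j), PV(i,j) (for some indices i,j) or one of their inverses, with the result again lying in S(n,A). Then this graph is connected: any building sequence in S(n,A) can be transformed into any other building sequence in S(n,A) by a finite sequence of these operations, with every intermediate sequence lying in S(n,A). -/

import Mathlib

/-- Moves of a Motzkin path: Up-right, Horizontal-right, Down-right. -/
inductive Move : Type
  | U : Move
  | H : Move
  | D : Move
deriving DecidableEq

open Move

/-- The vertical step of a move. -/
def Move.step : Move → ℤ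
  | U => 1
  | H => 0
  | D => -1

/-- The height of a path after its first `i` moves. -/
def heightAt (mz : List Move) (i : ℕ) : ℤ :=
  ((mz.take i).map Move.step).sum

/-- A word over {U,H,D} is a Motzkin path if it never goes below the x-axis
and ends on the x-axis. -/
def IsMotzkin (mz : List Move) : Prop :=
  (∀ i, 0 ≤ heightAt mz i) ∧ heightAt mz mz.length = 0

/-- The area between the x-axis and the path (sum of heights at integer points). -/
def area (mz : List Move) : ℤ :=
  ∑ i ∈ Finset.range (mz.length + 1), heightAt mz i

/-- `MZ n A` is the set of Motzkin paths of width `n` and area `A`. -/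
def MZ (n A : ℕ) : Set (List Move) :=
  {mz | mz.length = n ∧ IsMotzkin mz ∧ area mz = A}

/-- The weight `ω_i` of the `i`-th move (0-indexed): it is `h_i` for U and D moves
(height after the move for U, before the move for D) and `2h_i + 1` for H moves. -/
def moveWeight (mz : List Move) (i : ℕ) : ℤ :=
  match mz[i]? with
  | some U => heightAt mz (i + 1)
  | some D => heightAt mz i
  | some H => 2 * heightAt mz i + 1
  | none => 1

/-- The weight `ω(mz)` of a Motzkin path. -/
def weight (mz : List Move) : ℤ :=
  ∏ i ∈ Finset.range mz.length, moveWeight mz i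

/-- The total displacement `D(π) = Σ_i |i - π(i)|` of a permutation. -/
def totalDisp {n : ℕ} (π : Equiv.Perm (Fin n)) : ℤ :=
  ∑ i : Fin n, |((π i : ℕ) : ℤ) - ((i : ℕ) : ℤ)|

/-- The word over {U,H,D} associated to a permutation. -/
def toPath {n : ℕ} (π : Equiv.Perm (Fin n)) : List Move :=
  (List.finRange n).map fun i : Fin n =>
    if (i : ℕ) < (π i : ℕ) ∧ (i : ℕ) < (π.symm i : ℕ) then U
    else if (π i : ℕ) < (i : ℕ) ∧ (π.symm i : ℕ) < (i : ℕ) then D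
    else H

/-- The last fall length: the length of the maximal suffix consisting of D moves. -/
def lastFall (mz : List Move) : ℕ :=
  (mz.reverse.takeWhile (fun m => decide (m = D))).length

/-- The maximum height of a path. -/
def maxHeight (mz : List Move) : ℕ :=
  (Finset.range (mz.length + 1)).sup fun i => (heightAt mz i).toNat

/-- `flatsAt mz k` is the number of H moves of `mz` made at height `k`. -/
def flatsAt (mz : List Move) (k : ℕ) : ℕ :=
  ((Finset.range mz.length).filter fun j => mz[j]? = some H ∧ heightAt mz j = (k : ℤ)).card

/-- `peaksAt mz k` is the number of U moves of `mz` ending at height `k`. -/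
def peaksAt (mz : List Move) (k : ℕ) : ℕ :=
  ((Finset.range mz.length).filter fun j => mz[j]? = some U ∧ heightAt mz (j + 1) = (k : ℤ)).card

/-- `downsAt mz k` is the number of D moves of `mz` starting at height `k`. -/
def downsAt (mz : List Move) (k : ℕ) : ℕ :=
  ((Finset.range mz.length).filter fun j => mz[j]? = some D ∧ heightAt mz j = (k : ℤ)).card

/-- A candidate building sequence `(f_0, p_1, f_1, …, p_h, f_h)`, recorded as its
height `h` together with the flat counts `f` and peak counts `p`. -/
structure BSeq where
  h : ℕ
  f : ℕ → ℕ
  p : ℕ → ℕ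

/-- `Sset n A` is the set of building sequences for width `n` and area `A`:
all `p`-entries `p_1, …, p_h` are positive, entries beyond the height are zero, and the
width and area conditions hold. -/
def Sset (n A : ℕ) : Set BSeq :=
  {a | (∀ i, 1 ≤ i → i ≤ a.h → 0 < a.p i) ∧
       a.p 0 = 0 ∧
       (∀ i, a.h < i → a.p i = 0) ∧
       (∀ i, a.h < i → a.f i = 0) ∧
       (∑ i ∈ Finset.range (a.h + 1), a.f i) + 2 * (∑ i ∈ Finset.Icc 1 a.h, a.p i) = n ∧
       (∑ i ∈ Finset.range (a.h + 1), i * a.f i) +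
         (∑ i ∈ Finset.Icc 1 a.h, (2 * i - 1) * a.p i) = A}

/-- `mz` has building sequence `a`. -/
def hasBuildSeq (mz : List Move) (a : BSeq) : Prop :=
  maxHeight mz = a.h ∧ (∀ i, flatsAt mz i = a.f i) ∧ (∀ i, peaksAt mz i = a.p i)

/-- `perm(a) = ∏_{i=0}^h (2i+1)^{f_i} · ∏_{i=1}^h i^{2p_i}`. -/
def permWeight (a : BSeq) : ℕ :=
  (∏ i ∈ Finset.range (a.h + 1), (2 * i + 1) ^ a.f i) *
    ∏ i ∈ Finset.Icc 1 a.h, i ^ (2 * a.p i)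

/-- `m(a)`, the number of Motzkin paths with building sequence `a`. -/
def mcount (a : BSeq) : ℕ :=
  Nat.choose (a.f a.h + a.p a.h - 1) (a.p a.h - 1) *
    (∏ i ∈ Finset.Icc 1 (a.h - 1),
      Nat.choose (a.p (i + 1) + a.f i) (a.f i) *
        Nat.choose (a.p (i + 1) + a.f i + a.p i - 1) (a.p i - 1)) *
    Nat.choose (a.p 1 + a.f 0) (a.f 0)

/-- `M(n,A,l)`: the number of Motzkin paths of width `n`, area `A` and last fall length `l`
(for negative arguments there are no such paths, so the value is `0`; the value at
`(0,0,0)` is `1`, counting the empty path). -/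
noncomputable def Mcount (n A l : ℤ) : ℕ :=
  Nat.card {mz : List Move // (mz.length : ℤ) = n ∧ IsMotzkin mz ∧ area mz = A ∧
    (lastFall mz : ℤ) = l}

/-- `D(n,d,l)`: the sum of the weights of all Motzkin paths of width `n`, area `d` and
last fall length `l`. -/
noncomputable def Dw (n d l : ℤ) : ℤ :=
  ∑ᶠ mz ∈ {mz : List Move | (mz.length : ℤ) = n ∧ IsMotzkin mz ∧ area mz = d ∧
    (lastFall mz : ℤ) = l}, weight mz

/-- `M(n,A,h,p)`: the number of Motzkin paths of width `n`, area `A`, maximum height `h`,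
with exactly `p` U-moves ending at height `h` and no H-moves at height `h`. -/
noncomputable def Mtop (n A h p : ℤ) : ℕ :=
  Nat.card {mz : List Move // (mz.length : ℤ) = n ∧ IsMotzkin mz ∧ area mz = A ∧
    (maxHeight mz : ℤ) = h ∧ (peaksAt mz h.toNat : ℤ) = p ∧ flatsAt mz h.toNat = 0}

/-- `D(n,d,h,p)`: the sum of weights of Motzkin paths of width `n`, area `d`,
maximum height `h`, with exactly `p` U-moves ending at height `h` and no H-moves at height `h`. -/
noncomputable def Dtop (n d h p : ℤ) : ℤ :=
  ∑ᶠ mz ∈ {mz : List Move | (mz.length : ℤ) = n ∧ IsMotzkin mz ∧ area mz = d ∧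
    (maxHeight mz : ℤ) = h ∧ (peaksAt mz h.toNat : ℤ) = p ∧ flatsAt mz h.toNat = 0}, weight mz

/-- The area under the first `i` moves of a path (trapezoid rule; may be a half-integer). -/
def prefixArea (mz : List Move) (i : ℕ) : ℚ :=
  ∑ j ∈ Finset.range i, ((heightAt mz j : ℚ) + (heightAt mz (j + 1) : ℚ)) / 2

/-- The operation PF(i,j): `p_i ← p_i - 1`, `f_{i-1} ← f_{i-1} + 2`, `f_j ← f_j - 1`,
`f_{j+1} ← f_{j+1} + 1` (effects on coinciding indices add up). -/
def IsPF (i j : ℕ) (a b : BSeq) : Prop :=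
  1 ≤ i ∧
  (∀ k, (b.f k : ℤ) = (a.f k : ℤ) + (if k = i - 1 then 2 else 0) -
      (if k = j then 1 else 0) + (if k = j + 1 then 1 else 0)) ∧
  (∀ k, (b.p k : ℤ) = (a.p k : ℤ) - (if k = i then 1 else 0))

/-- The operation FV(i,j): `f_i ← f_i - 2`, `p_i ← p_i + 1`, `f_j ← f_j - 1`,
`f_{j+1} ← f_{j+1} + 1`. -/
def IsFV (i j : ℕ) (a b : BSeq) : Prop :=
  (∀ k, (b.f k : ℤ) = (a.f k : ℤ) - (if k = i then 2 else 0) -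
      (if k = j then 1 else 0) + (if k = j + 1 then 1 else 0)) ∧
  (∀ k, (b.p k : ℤ) = (a.p k : ℤ) + (if k = i then 1 else 0))

/-- The operation FF(i,j): `f_i ← f_i - 1`, `f_{i+1} ← f_{i+1} + 1`, `f_j ← f_j - 1`,
`f_{j-1} ← f_{j-1} + 1`. -/
def IsFF (i j : ℕ) (a b : BSeq) : Prop :=
  1 ≤ j ∧
  (∀ k, (b.f k : ℤ) = (a.f k : ℤ) - (if k = i then 1 else 0) +
      (if k = i + 1 then 1 else 0) - (if k = j then 1 else 0) +
      (if k = j - 1 then 1 else 0)) ∧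
  (∀ k, b.p k = a.p k)

/-- The operation PV(i,j): `p_i ← p_i - 1`, `f_{i-1} ← f_{i-1} + 2`, `p_j ← p_j - 1`,
`f_j ← f_j + 2`. -/
def IsPV (i j : ℕ) (a b : BSeq) : Prop :=
  1 ≤ i ∧ 1 ≤ j ∧
  (∀ k, (b.f k : ℤ) = (a.f k : ℤ) + (if k = i - 1 then 2 else 0) +
      (if k = j then 2 else 0)) ∧
  (∀ k, (b.p k : ℤ) = (a.p k : ℤ) - (if k = i then 1 else 0) - (if k = j then 1 else 0))

/-- `a` and `b` are adjacent: both lie in `S(n,A)` and `b` is obtained from `a` by one of the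
four local operations (for some indices `i`, `j`) or one of their inverses. -/
def BAdj (n A : ℕ) (a b : BSeq) : Prop :=
  a ∈ Sset n A ∧ b ∈ Sset n A ∧
    ∃ i j, IsPF i j a b ∨ IsPF i j b a ∨ IsFV i j a b ∨ IsFV i j b a ∨
      IsFF i j a b ∨ IsFF i j b a ∨ IsPV i j a b ∨ IsPV i j b a

/-
Every building sequence is connected to a normal form. First, PF(i, i-1) trades a surplus peak at
level `i` for a flat at each of the levels `i - 1` and `i`, until all `p_i = 1`. Then, while the
`F` flats, of total level `S`, satisfy `S < (h - 1) F`, they can be redistributed by FF moves so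
that none sits at level `h` and one sits below `h - 1`; PF(h, j) then removes the top peak and
lowers the height. For sequences with all `p_i = 1`, width and area give `F = n - 2h` and
`S = A - h²`, and the bound `S ≤ h F` shows that only one height admits no further lowering.

Two sequences with the same height and peaks have flat distributions with equal count and equal
first moment, so the differences `D t` of their cumulative flat counts vanish at both ends and
sum to zero. The FF move lifting a flat where `D` crosses from `≤ 0` to `> 0` and lowering one
where it crosses from `< 0` to `≥ 0` decreases `∑ |D t|` by 2.
-/

open Finset Relation

lemma sum_range_eq_of_vanishing {w : ℕ → ℤ} {h N : ℕ} (hw : ∀ k, h < k → w k = 0)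
    (hN : h < N) : ∑ k ∈ range N, w k = ∑ k ∈ range (h + 1), w k :=
  (sum_subset (range_subset_range.2 hN) fun k _ hk ↦ hw k (by simpa using hk)).symm

lemma sum_Icc_one_eq_sum_range {w : ℕ → ℤ} (hw : w 0 = 0) (h : ℕ) :
    ∑ k ∈ Icc 1 h, w k = ∑ k ∈ range (h + 1), w k :=
  sum_subset (fun k hk ↦ by simp at hk ⊢; omega) fun k _ hk ↦ by
    obtain rfl : k = 0 := by simp at *; omega
    exact hw

lemma exists_up_crossings {D : ℕ → ℤ} {N : ℕ} (h0 : D 0 = 0) (hN : D N = 0)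
    (hsum : ∑ t ∈ range N, D t = 0) (hne : ∃ t ∈ range N, D t ≠ 0) :
    (∃ i, D i ≤ 0 ∧ 0 < D (i + 1)) ∧ ∃ j, D j < 0 ∧ 0 ≤ D (j + 1) := by
  obtain ⟨t₁, -, ht₁⟩ := exists_pos_of_sum_zero_of_exists_nonzero D hsum hne
  obtain ⟨t₂, ht₂N, ht₂⟩ :=
    exists_pos_of_sum_zero_of_exists_nonzero (s := range N) (-D) (by simp [hsum])
      (by simpa using hne)
  constructor
  · obtain ⟨i, hi, hi'⟩ := Nat.exists_not_and_succ_of_not_zero_of_exists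
      (p := fun t ↦ 0 < D t) (by simp [h0]) ⟨t₁, ht₁⟩
    exact ⟨i, not_lt.1 hi, hi'⟩
  · obtain ⟨s, hs, hs'⟩ := Nat.exists_not_and_succ_of_not_zero_of_exists
      (p := fun s ↦ 0 ≤ D (t₂ + s)) (by simpa using ht₂)
      ⟨N - t₂, by rw [Nat.add_sub_cancel' (mem_range.1 ht₂N).le, hN]⟩
    exact ⟨t₂ + s, not_le.1 hs, hs'⟩

namespace BSeq

def mass (g : ℕ → ℕ) (N : ℕ) : ℤ := ∑ k ∈ range N, (g k : ℤ)

def moment (g : ℕ → ℕ) (N : ℕ) : ℤ := ∑ k ∈ range N, (k : ℤ) * g k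

lemma mass_eq_of_vanishing {g : ℕ → ℕ} {h N : ℕ} (hg : ∀ k, h < k → g k = 0) (hN : h < N) :
    mass g N = mass g (h + 1) :=
  sum_range_eq_of_vanishing (fun k hk ↦ by simp [hg k hk]) hN

lemma moment_eq_of_vanishing {g : ℕ → ℕ} {h N : ℕ} (hg : ∀ k, h < k → g k = 0) (hN : h < N) :
    moment g N = moment g (h + 1) :=
  sum_range_eq_of_vanishing (fun k hk ↦ by simp [hg k hk]) hN

lemma mass_nonneg (g : ℕ → ℕ) (N : ℕ) : 0 ≤ mass g N :=
  sum_nonneg fun _ _ ↦ by positivity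

lemma moment_nonneg (g : ℕ → ℕ) (N : ℕ) : 0 ≤ moment g N :=
  sum_nonneg fun _ _ ↦ by positivity

lemma moment_le_mul_mass (g : ℕ → ℕ) (h : ℕ) : moment g (h + 1) ≤ h * mass g (h + 1) := by
  rw [mass, mul_sum]
  exact sum_le_sum fun k hk ↦
    mul_le_mul_of_nonneg_right (by simp at hk; omega) (by positivity)

lemma mass_succ (g : ℕ → ℕ) (t : ℕ) : mass g (t + 1) = mass g t + g t :=
  sum_range_succ _ _

lemma sum_range_mass (g : ℕ → ℕ) (N : ℕ) :
    ∑ t ∈ range N, mass g t = (N - 1) * mass g N - moment g N := by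
  induction N with
  | zero => simp [mass, moment]
  | succ N ih =>
    rw [sum_range_succ, ih]
    simp only [mass, moment, sum_range_succ]
    push_cast
    ring

def width (a : BSeq) (N : ℕ) : ℤ := mass a.f N + 2 * mass a.p N

def areaSum (a : BSeq) (N : ℕ) : ℤ := moment a.f N + 2 * moment a.p N - mass a.p N

def Admissible (a : BSeq) : Prop :=
  (∀ i, 1 ≤ i → i ≤ a.h → 0 < a.p i) ∧ a.p 0 = 0 ∧ (∀ i, a.h < i → a.p i = 0) ∧
    (∀ i, a.h < i → a.f i = 0)

variable {n A : ℕ} {a b : BSeq}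

lemma admissible_of_mem_Sset (ha : a ∈ Sset n A) : a.Admissible :=
  ⟨ha.1, ha.2.1, ha.2.2.1, ha.2.2.2.1⟩

lemma Admissible.width_eq {N : ℕ} (ha : a.Admissible) (hN : a.h < N) :
    a.width N = ↑((∑ i ∈ range (a.h + 1), a.f i) + 2 * ∑ i ∈ Icc 1 a.h, a.p i) := by
  rw [width, mass_eq_of_vanishing ha.2.2.2 hN, mass_eq_of_vanishing ha.2.2.1 hN, mass, mass]
  push_cast
  rw [sum_Icc_one_eq_sum_range (w := fun k ↦ (a.p k : ℤ)) (by simp [ha.2.1])]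

lemma Admissible.areaSum_eq {N : ℕ} (ha : a.Admissible) (hN : a.h < N) :
    a.areaSum N = ↑((∑ i ∈ range (a.h + 1), i * a.f i) +
      ∑ i ∈ Icc 1 a.h, (2 * i - 1) * a.p i) := by
  have hIcc : ∀ i ∈ Icc 1 a.h, (((2 * i - 1) * a.p i : ℕ) : ℤ) = (2 * i - 1 : ℤ) * a.p i := by
    intro i hi
    simp only [mem_Icc] at hi
    push_cast [Nat.cast_sub (by omega : 1 ≤ 2 * i)]
    ring
  rw [areaSum, moment_eq_of_vanishing ha.2.2.2 hN, moment_eq_of_vanishing ha.2.2.1 hN,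
    mass_eq_of_vanishing ha.2.2.1 hN, Nat.cast_add, Nat.cast_sum, Nat.cast_sum, sum_congr rfl hIcc,
    sum_Icc_one_eq_sum_range (w := fun k ↦ (2 * k - 1 : ℤ) * a.p k) (by simp [ha.2.1]),
    moment, moment, mass]
  simp only [sub_mul, mul_assoc, sum_sub_distrib, ← mul_sum, one_mul, Nat.cast_mul]
  ring

lemma mem_Sset_iff {N : ℕ} (hN : a.h < N) :
    a ∈ Sset n A ↔ a.Admissible ∧ a.width N = n ∧ a.areaSum N = A := by
  constructor
  · intro ha
    have hadm := admissible_of_mem_Sset ha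
    exact ⟨hadm, by rw [hadm.width_eq hN, ha.2.2.2.2.1], by rw [hadm.areaSum_eq hN, ha.2.2.2.2.2]⟩
  · rintro ⟨ha, hn, hA⟩
    rw [ha.width_eq hN, Nat.cast_inj] at hn
    rw [ha.areaSum_eq hN, Nat.cast_inj] at hA
    exact ⟨ha.1, ha.2.1, ha.2.2.1, ha.2.2.2, hn, hA⟩

lemma mem_Sset_of_width_areaSum {N : ℕ} (ha : a ∈ Sset n A) (hb : b.Admissible)
    (haN : a.h < N) (hbN : b.h < N) (hw : b.width N = a.width N)
    (har : b.areaSum N = a.areaSum N) : b ∈ Sset n A := by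
  obtain ⟨-, hn, hA⟩ := (mem_Sset_iff haN).1 ha
  exact (mem_Sset_iff hbN).2 ⟨hb, hw.trans hn, har.trans hA⟩

/-- PF(i,j) applied to `a`. The new height `h'` is supplied by the caller: it drops exactly when
the last peak at the top level is removed. -/
def pfMove (a : BSeq) (i j h' : ℕ) : BSeq :=
  ⟨h', fun k ↦ a.f k + (if k = i - 1 then 2 else 0) + (if k = j + 1 then 1 else 0) -
      (if k = j then 1 else 0),
    fun k ↦ a.p k - if k = i then 1 else 0⟩

def ffMove (a : BSeq) (i j : ℕ) : BSeq :=
  ⟨a.h, fun k ↦ a.f k + (if k = i + 1 then 1 else 0) + (if k = j - 1 then 1 else 0) -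
      (if k = i then 1 else 0) - (if k = j then 1 else 0),
    a.p⟩

lemma ffMove_admissible {i j : ℕ} (ha : a.Admissible) (hi : i + 1 ≤ a.h) (hj : j ≤ a.h) :
    (a.ffMove i j).Admissible :=
  ⟨ha.1, ha.2.1, ha.2.2.1, fun k hk ↦ by
    simp only [ffMove] at hk ⊢
    rw [ha.2.2.2 k hk]
    split_ifs <;> subst_vars <;> omega⟩

end BSeq

open BSeq

section Moves

variable {n A i j : ℕ} {a b : BSeq}

lemma isPF_pfMove {h' : ℕ} (hi : 1 ≤ i) (hp : 1 ≤ a.p i) (hf : j = i - 1 ∨ 1 ≤ a.f j) :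
    IsPF i j a (a.pfMove i j h') :=
  ⟨hi, fun k ↦ by simp only [pfMove]; split_ifs <;> subst_vars <;> omega,
    fun k ↦ by simp only [pfMove]; split_ifs <;> subst_vars <;> omega⟩

lemma isFF_ffMove (hj : 1 ≤ j) (hi : 1 ≤ a.f i) (hj' : 1 ≤ a.f j) (hij : i ≠ j ∨ 2 ≤ a.f i) :
    IsFF i j a (a.ffMove i j) :=
  ⟨hj, fun k ↦ by simp only [ffMove]; split_ifs <;> subst_vars <;> omega, fun _ ↦ rfl⟩

lemma IsPF.mass_p_eq (hab : IsPF i j a b) {N : ℕ} (hi : i < N) :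
    mass b.p N = mass a.p N - 1 := by
  simp only [mass, hab.2.2, sum_sub_distrib, sum_ite_eq', mem_range, hi, if_true]

lemma IsPF.width_eq_and_areaSum_eq (hab : IsPF i j a b) {N : ℕ} (hi : i < N) (hj : j + 1 < N) :
    b.width N = a.width N ∧ b.areaSum N = a.areaSum N := by
  obtain ⟨hi1, hf, hp⟩ := hab
  simp only [width, areaSum, mass, moment, hf, hp, mul_add, mul_sub, sum_add_distrib,
    sum_sub_distrib, mul_ite, mul_zero, sum_ite_eq', mem_range, hi, hj,
    show i - 1 < N by omega, show j < N by omega, if_true]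
  push_cast [Nat.cast_sub hi1]
  constructor <;> ring

lemma IsPF.mem_Sset (hab : IsPF i j a b) (ha : a ∈ Sset n A) (hb : b.Admissible) :
    b ∈ Sset n A :=
  let hN := hab.width_eq_and_areaSum_eq (N := a.h + b.h + i + j + 2) (by omega) (by omega)
  mem_Sset_of_width_areaSum ha hb (by omega) (by omega) hN.1 hN.2

lemma IsFF.mass_f_eq (hab : IsFF i j a b) (t : ℕ) :
    mass b.f t = mass a.f t - (if t = i + 1 then 1 else 0) + (if t = j then 1 else 0) := by
  obtain ⟨hj1, hf, -⟩ := hab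
  simp only [mass, hf, sum_add_distrib, sum_sub_distrib, sum_ite_eq', mem_range]
  split_ifs <;> subst_vars <;> omega

lemma IsFF.moment_f_eq (hab : IsFF i j a b) {N : ℕ} (hi : i + 1 < N) (hj : j < N) :
    moment b.f N = moment a.f N := by
  obtain ⟨hj1, hf, -⟩ := hab
  simp only [moment, hf, mul_add, mul_sub, sum_add_distrib, sum_sub_distrib, mul_ite, mul_zero,
    sum_ite_eq', mem_range, hi, hj, show i < N by omega, show j - 1 < N by omega, if_true]
  push_cast [Nat.cast_sub hj1]
  ring

lemma IsFF.mem_Sset (hab : IsFF i j a b) (ha : a ∈ Sset n A) (hb : b.Admissible) :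
    b ∈ Sset n A := by
  set N := a.h + b.h + i + j + 2
  have hp : b.p = a.p := funext hab.2.2
  have hf : mass b.f N = mass a.f N := by
    rw [hab.mass_f_eq, if_neg (by omega), if_neg (by omega)]
    ring
  refine mem_Sset_of_width_areaSum ha hb (N := N) (by omega) (by omega) ?_ ?_
  · rw [width, width, hf, hp]
  · rw [areaSum, areaSum, hab.moment_f_eq (by omega) (by omega), hp]

lemma BAdj.of_isPF (ha : a ∈ Sset n A) (hb : b.Admissible) (hab : IsPF i j a b) :
    BAdj n A a b :=
  ⟨ha, hab.mem_Sset ha hb, i, j, Or.inl hab⟩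

lemma BAdj.of_isFF (ha : a ∈ Sset n A) (hb : b.Admissible) (hab : IsFF i j a b) :
    BAdj n A a b :=
  ⟨ha, hab.mem_Sset ha hb, i, j, by tauto⟩

instance : Std.Symm (BAdj n A) :=
  ⟨fun _ _ ⟨ha, hb, i, j, hab⟩ ↦ ⟨hb, ha, i, j, by tauto⟩⟩

end Moves

namespace BSeq

variable {n A i j : ℕ} {a b c : BSeq}

def flatGap (a b : BSeq) (t : ℕ) : ℤ := mass a.f t - mass b.f t

def flatDist (a b : BSeq) : ℕ := ∑ t ∈ range (a.h + 2), (flatGap a b t).natAbs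

lemma flatGap_succ (a b : BSeq) (t : ℕ) :
    flatGap a b (t + 1) = flatGap a b t + a.f t - b.f t := by
  simp only [flatGap, mass_succ]
  ring

lemma mass_f_eq_and_moment_f_eq (ha : a ∈ Sset n A) (hb : b ∈ Sset n A) (hp : a.p = b.p)
    {N : ℕ} (haN : a.h < N) (hbN : b.h < N) :
    mass a.f N = mass b.f N ∧ moment a.f N = moment b.f N := by
  obtain ⟨-, hwa, hAa⟩ := (mem_Sset_iff haN).1 ha
  obtain ⟨-, hwb, hAb⟩ := (mem_Sset_iff hbN).1 hb
  simp only [width, areaSum, hp] at hwa hAa hwb hAb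
  constructor <;> linarith

lemma eq_of_flatDist_eq_zero (ha : a ∈ Sset n A) (hb : b ∈ Sset n A) (hh : a.h = b.h)
    (hp : a.p = b.p) (hd : flatDist a b = 0) : a = b := by
  have hD : ∀ t ≤ a.h + 1, flatGap a b t = 0 := fun t ht ↦
    Int.natAbs_eq_zero.1 (sum_eq_zero_iff.1 hd t (by simp; omega))
  have hf : a.f = b.f := funext fun t ↦ by
    rcases le_or_gt t a.h with ht | ht
    · have := flatGap_succ a b t
      rw [hD t (by omega), hD (t + 1) (by omega)] at this
      omega
    · rw [(admissible_of_mem_Sset ha).2.2.2 t ht, (admissible_of_mem_Sset hb).2.2.2 t (hh ▸ ht)]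
  cases a
  cases b
  simp_all

lemma flatDist_add_two (hac : IsFF i j a c) (hc : c.h = a.h) (hi : 0 < flatGap a b (i + 1))
    (hj : flatGap a b j < 0) (hih : i + 1 < a.h + 2) (hjh : j < a.h + 2) :
    flatDist c b + 2 = flatDist a b := by
  have hgap : ∀ t ∈ range (a.h + 2), (flatGap a b t).natAbs =
      (flatGap c b t).natAbs + ((if t = i + 1 then 1 else 0) + if t = j then 1 else 0) := by
    intro t _
    simp only [flatGap, hac.mass_f_eq] at hi hj ⊢
    split_ifs <;> subst_vars <;> omega
  rw [flatDist, flatDist, sum_congr rfl hgap, sum_add_distrib, sum_add_distrib, sum_ite_eq',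
    sum_ite_eq', if_pos (mem_range.2 hih), if_pos (mem_range.2 hjh), hc]

lemma exists_ffMove_step (ha : a ∈ Sset n A) (hb : b ∈ Sset n A) (hh : a.h = b.h)
    (hp : a.p = b.p) (hne : flatDist a b ≠ 0) :
    ∃ c, BAdj n A a c ∧ c.h = a.h ∧ c.p = a.p ∧ flatDist c b < flatDist a b := by
  have hDh : ∀ t, a.h < t → flatGap a b t = 0 := fun t ht ↦
    sub_eq_zero.2 (mass_f_eq_and_moment_f_eq ha hb hp ht (hh ▸ ht)).1
  have hsum : ∑ t ∈ range (a.h + 2), flatGap a b t = 0 := by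
    obtain ⟨h₁, h₂⟩ := mass_f_eq_and_moment_f_eq ha hb hp (N := a.h + 2) (by omega) (by omega)
    simp only [flatGap, sum_sub_distrib, sum_range_mass, h₁, h₂, sub_self]
  have hex : ∃ t ∈ range (a.h + 2), flatGap a b t ≠ 0 := by
    by_contra! h
    exact hne (sum_eq_zero fun t ht ↦ by simp [h t ht])
  obtain ⟨⟨i, hi, hi'⟩, j, hj, hj'⟩ :=
    exists_up_crossings (by simp [flatGap, mass]) (hDh _ (by omega)) hsum hex
  have hfi := flatGap_succ a b i
  have hfj := flatGap_succ a b j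
  have hih : i + 1 ≤ a.h := by
    by_contra! h
    linarith [hDh _ h]
  have hjh : j ≤ a.h := by
    by_contra! h
    linarith [hDh _ h]
  have hj1 : 1 ≤ j := by
    by_contra! h
    obtain rfl : j = 0 := by omega
    simp [flatGap, mass] at hj
  have hij : i ≠ j ∨ 2 ≤ a.f i := by
    rcases eq_or_ne i j with rfl | h
    · right; omega
    · exact .inl h
  have hff : IsFF i j a (a.ffMove i j) := isFF_ffMove hj1 (by omega) (by omega) hij
  refine ⟨a.ffMove i j, .of_isFF ha (ffMove_admissible (admissible_of_mem_Sset ha) hih hjh) hff,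
    rfl, rfl, ?_⟩
  have := flatDist_add_two hff rfl (b := b) hi' hj (by omega) (by omega)
  omega

theorem reflTransGen_of_h_eq_of_p_eq (ha : a ∈ Sset n A) (hb : b ∈ Sset n A) (hh : a.h = b.h)
    (hp : a.p = b.p) : ReflTransGen (BAdj n A) a b := by
  induction hd : flatDist a b using Nat.strong_induction_on generalizing a with
  | _ d ih =>
  by_cases hne : flatDist a b = 0
  · rw [eq_of_flatDist_eq_zero ha hb hh hp hne]
  · obtain ⟨c, hac, hch, hcp, hlt⟩ := exists_ffMove_step ha hb hh hp hne
    exact .head hac (ih _ (hd ▸ hlt) hac.2.1 (hch.trans hh) (hcp.trans hp) rfl)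

def UnitPeaks (a : BSeq) : Prop := ∀ i, 1 ≤ i → i ≤ a.h → a.p i = 1

lemma exists_unitPeaks (ha : a ∈ Sset n A) :
    ∃ b ∈ Sset n A, b.UnitPeaks ∧ ReflTransGen (BAdj n A) a b := by
  induction hm : (mass a.p (a.h + 1)).toNat using Nat.strong_induction_on generalizing a with
  | _ m ih =>
  have hadm := admissible_of_mem_Sset ha
  by_cases hu : a.UnitPeaks
  · exact ⟨a, ha, hu, .refl⟩
  obtain ⟨i, hi1, hih, hpi⟩ : ∃ i, 1 ≤ i ∧ i ≤ a.h ∧ 2 ≤ a.p i := by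
    simp only [UnitPeaks, not_forall] at hu
    obtain ⟨i, hi1, hih, hne⟩ := hu
    exact ⟨i, hi1, hih, by have := hadm.1 i hi1 hih; omega⟩
  set b := a.pfMove i (i - 1) a.h
  have hpf : IsPF i (i - 1) a b := isPF_pfMove hi1 (by omega) (.inl rfl)
  have hbh : b.h = a.h := rfl
  have hb : b.Admissible := by
    refine ⟨fun k hk1 hk2 ↦ ?_, ?_, fun k hk ↦ ?_, fun k hk ↦ ?_⟩ <;> simp only [b, pfMove]
    · have := hadm.1 k hk1 hk2
      split_ifs <;> subst_vars <;> omega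
    · rw [hadm.2.1, if_neg (by omega)]
    · rw [hadm.2.2.1 k hk, if_neg (by omega)]
    · rw [hadm.2.2.2 k hk]
      split_ifs <;> omega
  have hab : BAdj n A a b := .of_isPF ha hb hpf
  have hmass := hpf.mass_p_eq (N := a.h + 1) (by omega)
  have hlt : (mass b.p (a.h + 1)).toNat < m := by
    have := mass_nonneg b.p (a.h + 1)
    omega
  obtain ⟨c, hc, hcu, hbc⟩ := ih _ hlt hab.2.1 rfl
  exact ⟨c, hc, hcu, .head hab hbc⟩

lemma UnitPeaks.mass_p (hu : a.UnitPeaks) (hadm : a.Admissible) :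
    mass a.p (a.h + 1) = a.h := by
  rw [mass, sum_range_succ', hadm.2.1,
    sum_congr rfl fun k hk ↦ by rw [hu (k + 1) (by omega) (by simp at hk; omega)]]
  simp

lemma UnitPeaks.two_mul_moment_p (hu : a.UnitPeaks) :
    2 * moment a.p (a.h + 1) = a.h * (a.h + 1) := by
  have hk : ∀ k ∈ range (a.h + 1), (k : ℤ) * a.p k = k := fun k hk ↦ by
    rcases Nat.eq_zero_or_pos k with rfl | hk0
    · simp
    · rw [hu k hk0 (by simp at hk; omega)]
      simp
  have gauss : ((∑ k ∈ range (a.h + 1), k : ℕ) : ℤ) * 2 = a.h * (a.h + 1) := by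
    have := sum_range_id_mul_two (a.h + 1)
    rw [Nat.add_sub_cancel, mul_comm (a.h + 1)] at this
    exact_mod_cast this
  rw [moment, sum_congr rfl hk, ← Nat.cast_sum]
  linarith

lemma UnitPeaks.mass_f_and_moment_f (hu : a.UnitPeaks) (ha : a ∈ Sset n A) :
    mass a.f (a.h + 1) + 2 * a.h = n ∧ moment a.f (a.h + 1) + a.h ^ 2 = A := by
  obtain ⟨hadm, hn, hA⟩ := (mem_Sset_iff (Nat.lt_succ_self a.h)).1 ha
  have h₁ := hu.mass_p hadm
  have h₂ := hu.two_mul_moment_p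
  rw [width, h₁] at hn
  rw [areaSum, h₂, h₁] at hA
  exact ⟨hn, by linarith⟩

/-- The flats of `a` could be rearranged at levels `< h` without all of them sitting at level
`h - 1`; this leaves room for the PF move removing the top peak. -/
def Reducible (a : BSeq) : Prop :=
  moment a.f (a.h + 1) < (a.h - 1 : ℤ) * mass a.f (a.h + 1)

lemma exists_mass_moment_eq (m : ℕ) : ∀ F S : ℕ, S ≤ m * F →
    ∃ g : ℕ → ℕ, (∀ k, m < k → g k = 0) ∧ mass g (m + 1) = F ∧ moment g (m + 1) = S
  | 0, S, hS => ⟨0, fun _ _ ↦ rfl, by simp [mass], by simp [moment]; omega⟩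
  | F + 1, S, hS => by
    obtain ⟨g, hg, hF, hS'⟩ :=
      exists_mass_moment_eq m F (S - min S m) (by rw [Nat.mul_succ] at hS; omega)
    refine ⟨fun k ↦ g k + if k = min S m then 1 else 0, fun k hk ↦ ?_, ?_, ?_⟩
    · show g k + _ = 0
      rw [hg k hk, if_neg (by omega)]
    · simp only [mass, Nat.cast_add, sum_add_distrib, Nat.cast_ite, Nat.cast_one,
        Nat.cast_zero, sum_ite_eq', mem_range, show min S m < m + 1 by omega, if_true]
      rw [← mass, hF]
    · simp only [moment, Nat.cast_add, mul_add, sum_add_distrib, Nat.cast_ite, Nat.cast_one,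
        Nat.cast_zero, mul_ite, mul_one, mul_zero, sum_ite_eq', mem_range,
        show min S m < m + 1 by omega, if_true]
      rw [← moment, hS']
      omega

lemma exists_flats_below_top (ha : a ∈ Sset n A) (hr : a.Reducible) :
    ∃ c ∈ Sset n A, c.h = a.h ∧ c.p = a.p ∧ c.f a.h = 0 ∧ ∃ j, j + 2 ≤ a.h ∧ 1 ≤ c.f j := by
  have hadm := admissible_of_mem_Sset ha
  have h2 : 2 ≤ a.h := by
    by_contra! h
    have := mul_nonpos_of_nonpos_of_nonneg (by omega : (a.h - 1 : ℤ) ≤ 0)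
      (mass_nonneg a.f (a.h + 1))
    exact (moment_nonneg a.f (a.h + 1)).not_gt (hr.trans_le this)
  obtain ⟨F, hF⟩ := Int.eq_ofNat_of_zero_le (mass_nonneg a.f (a.h + 1))
  obtain ⟨S, hS⟩ := Int.eq_ofNat_of_zero_le (moment_nonneg a.f (a.h + 1))
  have hSF : S ≤ (a.h - 1) * F := by
    rw [Reducible, hF, hS] at hr
    have : ((a.h - 1 : ℕ) : ℤ) = a.h - 1 := by omega
    exact_mod_cast (this ▸ hr).le
  obtain ⟨g, hg, hgF, hgS⟩ := exists_mass_moment_eq (a.h - 1) F S hSF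
  have hgF' : mass g (a.h + 1) = F := (mass_eq_of_vanishing hg (by omega)).trans hgF
  have hgS' : moment g (a.h + 1) = S := (moment_eq_of_vanishing hg (by omega)).trans hgS
  have hc : (⟨a.h, g, a.p⟩ : BSeq).Admissible :=
    ⟨hadm.1, hadm.2.1, hadm.2.2.1, fun k hk ↦ hg k (by simp at hk; omega)⟩
  refine ⟨⟨a.h, g, a.p⟩, mem_Sset_of_width_areaSum ha hc (N := a.h + 1) (by omega) (by simp)
    (by simp [width, hgF', hF]) (by simp [areaSum, hgS', hS]), rfl, rfl, hg _ (by omega), ?_⟩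
  by_contra! hlow
  have : moment g (a.h + 1) = (a.h - 1 : ℤ) * mass g (a.h + 1) := by
    rw [moment_eq_of_vanishing hg (by omega), mass_eq_of_vanishing hg (by omega), mass, mul_sum]
    refine sum_congr rfl fun k hk ↦ ?_
    rcases eq_or_ne k (a.h - 1) with rfl | hk'
    · push_cast [Nat.cast_sub (by omega : 1 ≤ a.h)]; ring
    · rw [show g k = 0 from Nat.lt_one_iff.1 (hlow k (by simp at hk; omega))]
      simp
  rw [Reducible, hF, hS] at hr
  rw [hgF', hgS'] at this
  linarith

lemma exists_lower_height (ha : a ∈ Sset n A) (hu : a.UnitPeaks) (hr : a.Reducible) :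
    ∃ b ∈ Sset n A, b.UnitPeaks ∧ b.h < a.h ∧ ReflTransGen (BAdj n A) a b := by
  obtain ⟨c, hc, hch, hcp, hcf, j, hj, hcj⟩ := exists_flats_below_top ha hr
  have hcadm := admissible_of_mem_Sset hc
  have hac := reflTransGen_of_h_eq_of_p_eq ha hc hch.symm hcp.symm
  have hpu : ∀ i, 1 ≤ i → i ≤ a.h → c.p i = 1 := fun i hi1 hi2 ↦ hcp ▸ hu i hi1 hi2
  set d := c.pfMove a.h j (a.h - 1)
  have hpf : IsPF a.h j c d :=
    isPF_pfMove (by omega) (hpu a.h (by omega) le_rfl).ge (.inr hcj)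
  have hd : d.Admissible := by
    refine ⟨fun k hk1 hk2 ↦ ?_, ?_, fun k hk ↦ ?_, fun k hk ↦ ?_⟩ <;> simp only [d, pfMove] at *
    · rw [hpu k hk1 (by omega), if_neg (by omega)]
      omega
    · rw [hcadm.2.1, if_neg (by omega)]
    · rcases eq_or_ne k a.h with rfl | hk'
      · rw [hpu _ (by omega) le_rfl, if_pos rfl]
      · rw [hcadm.2.2.1 k (by omega)]
        omega
    · have : c.f k = 0 := by
        rcases eq_or_ne k a.h with rfl | hk'
        · exact hcf
        · exact hcadm.2.2.2 k (by omega)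
      rw [this]
      split_ifs <;> omega
  refine ⟨d, hpf.mem_Sset hc hd, fun k hk1 hk2 ↦ ?_, by simp only [d, pfMove]; omega,
    hac.tail (.of_isPF hc hd hpf)⟩
  simp only [d, pfMove] at hk2 ⊢
  rw [hpu k hk1 (by omega), if_neg (by omega)]

lemma exists_normal_of_unitPeaks (ha : a ∈ Sset n A) (hu : a.UnitPeaks) :
    ∃ b ∈ Sset n A, b.UnitPeaks ∧ ¬ b.Reducible ∧ ReflTransGen (BAdj n A) a b := by
  induction hm : a.h using Nat.strong_induction_on generalizing a with
  | _ m ih =>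
  by_cases hr : a.Reducible
  · obtain ⟨c, hc, hcu, hch, hac⟩ := exists_lower_height ha hu hr
    obtain ⟨b, hb, hbu, hbr, hcb⟩ := ih _ (hm ▸ hch) hc hcu rfl
    exact ⟨b, hb, hbu, hbr, hac.trans hcb⟩
  · exact ⟨a, ha, hu, hr, .refl⟩

lemma exists_normal (ha : a ∈ Sset n A) :
    ∃ b ∈ Sset n A, b.UnitPeaks ∧ ¬ b.Reducible ∧ ReflTransGen (BAdj n A) a b := by
  obtain ⟨a₁, ha₁, hu₁, haa₁⟩ := exists_unitPeaks ha
  obtain ⟨b, hb, hbu, hbr, ha₁b⟩ := exists_normal_of_unitPeaks ha₁ hu₁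
  exact ⟨b, hb, hbu, hbr, haa₁.trans ha₁b⟩

lemma h_le_of_not_reducible (ha : a ∈ Sset n A) (hb : b ∈ Sset n A) (hua : a.UnitPeaks)
    (hub : b.UnitPeaks) (hbr : ¬ b.Reducible) : b.h ≤ a.h := by
  by_contra! hlt
  obtain ⟨hna, hAa⟩ := hua.mass_f_and_moment_f ha
  obtain ⟨hnb, hAb⟩ := hub.mass_f_and_moment_f hb
  have hSa := moment_le_mul_mass a.f a.h
  have hFb := mass_nonneg b.f (b.h + 1)
  rw [Reducible, not_lt] at hbr
  have hlt' : (a.h : ℤ) + 1 ≤ b.h := by exact_mod_cast hlt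
  nlinarith [mul_nonneg (sub_nonneg.2 hlt')
    (by linarith : (0 : ℤ) ≤ mass b.f (b.h + 1) + b.h + 1 - a.h)]

lemma p_eq_of_unitPeaks (ha : a ∈ Sset n A) (hb : b ∈ Sset n A) (hua : a.UnitPeaks)
    (hub : b.UnitPeaks) (hh : a.h = b.h) : a.p = b.p := by
  have hadm := admissible_of_mem_Sset ha
  have hbdm := admissible_of_mem_Sset hb
  funext k
  rcases Nat.eq_zero_or_pos k with rfl | hk
  · rw [hadm.2.1, hbdm.2.1]
  rcases le_or_gt k a.h with hka | hka
  · rw [hua k hk hka, hub k hk (hh ▸ hka)]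
  · rw [hadm.2.2.1 k hka, hbdm.2.2.1 k (hh ▸ hka)]

end BSeq

/-- the graph on `S(n,A)` induced by the local operations is connected. -/
theorem building_sequences_graph_connected (n A : ℕ) (a b : BSeq)
    (ha : a ∈ Sset n A) (hb : b ∈ Sset n A) :
    Relation.ReflTransGen (BAdj n A) a b := by
  obtain ⟨a', ha', hua, hra, haa'⟩ := exists_normal ha
  obtain ⟨b', hb', hub, hrb, hbb'⟩ := exists_normal hb
  have hh : a'.h = b'.h := le_antisymm (h_le_of_not_reducible hb' ha' hub hua hra)
    (h_le_of_not_reducible ha' hb' hua hub hrb)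
  have ha'b' := reflTransGen_of_h_eq_of_p_eq ha' hb' hh (p_eq_of_unitPeaks ha' hb' hua hub hh)
  exact haa'.trans (ha'b'.trans (symm hbb'))
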